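/- Let (A, M, H1) be a sparse approximation triple with constants s_A and a_A, let H2 be a Hilbert space, T ∈ B(H1,H2) have the restricted isometry property on 2A and on 4A with constants δ₂ := δ_{2A}(T) and δ₄ := δ_{4A}(T), and let F : H1 → H2 be continuous with F(0) = 0. Write γ₂ := γ_{F,T}(2A) and γ₄ := γ_{F,T}(4A), and assume √2(√δ₂ + γ₂) + 4γ₄ + (√δ₂ + 3γ₂ + 4√δ₄)·√(a_A s_A) < 1. Then there exist constants C₁, C₂ > 0, independent of x⁰ ∈ M and ε ≥ 0, such that for every x⁰ ∈ M and ε > 0 the solution x⁰_M := argmin{‖x̂‖_M : x̂ ∈ M, ‖F(x̂) − F(x⁰)‖ ≤ ε} satisfies ‖x⁰_M − x⁰‖_{H1} ≤ C₁√a_A·σ_{A,M}(x⁰) + C₂ε and ‖x⁰_M − x⁰‖_M ≤ C₁σ_{A,M}(x⁰) + C₂√(s_A)·ε. -/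
import Mathlib


/-- A set-valued "best approximator": `y` is a best approximation of `x` in `K` (w.r.t. the norm
of `M`). -/
def IsBestApprox {M : Type*} [NormedAddCommGroup M] (K : Set M) (x y : M) : Prop :=
  y ∈ K ∧ ∀ z ∈ K, ‖x - y‖ ≤ ‖x - z‖

/-- A sparse approximation triple `(A, M, H1)`: the Banach space `M` is continuously embedded
into the Hilbert space `H1` via `j` with embedding norm at most one, `A = ⋃ i, A_i` is a union of
closed linear subspaces, every nonempty closed subset of `M` is proximinal, best approximators
onto each `A_i` w.r.t. the `M`-norm are also best approximators w.r.t. the `H1`-norm, the norms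
split along such best approximators, and `⋃_{k ≥ 1} kA` is dense in `H1`. -/
structure SparseApproxTriple (H1 : Type*) [NormedAddCommGroup H1] [InnerProductSpace ℝ H1]
    (M : Type*) [NormedAddCommGroup M] [NormedSpace ℝ M] (I : Type*) where
  /-- the (injective, norm at most one) embedding of `M` into `H1` -/
  j : M →ₗ[ℝ] H1
  j_inj : Function.Injective j
  j_norm_le : ∀ x : M, ‖j x‖ ≤ ‖x‖
  /-- the subspaces whose union is `A` -/
  Asub : I → Submodule ℝ M
  index_nonempty : Nonempty I
  Asub_closed : ∀ i : I, IsClosed (Asub i : Set M)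
  A_closed : IsClosed (⋃ i : I, (Asub i : Set M))
  /-- proximinality: every nonempty closed subset of `M` is proximinal -/
  prox : ∀ K : Set M, K.Nonempty → IsClosed K → ∀ x : M, ∃ y ∈ K, ∀ z ∈ K, ‖x - y‖ ≤ ‖x - z‖
  /-- common best approximator property -/
  common_best : ∀ (i : I) (x y : M), y ∈ Asub i → (∀ z ∈ Asub i, ‖x - y‖ ≤ ‖x - z‖) →
    ∀ z ∈ Asub i, ‖j x - j y‖ ≤ ‖j x - j z‖
  /-- norm splitting in `M` -/
  norm_split_M : ∀ (i : I) (x y : M), y ∈ Asub i → (∀ z ∈ Asub i, ‖x - y‖ ≤ ‖x - z‖) →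
    ‖x‖ = ‖y‖ + ‖x - y‖
  /-- norm splitting in `H1` -/
  norm_split_H : ∀ (i : I) (x y : M), y ∈ Asub i → (∀ z ∈ Asub i, ‖x - y‖ ≤ ‖x - z‖) →
    ‖j x‖ ^ 2 = ‖j y‖ ^ 2 + ‖j x - j y‖ ^ 2
  /-- the embedding of `A` into `M` is bounded (so that the sparsity `s_A` is finite) -/
  sA_bddAbove : BddAbove
    {r : ℝ | ∃ x : M, x ∈ (⋃ i : I, (Asub i : Set M)) ∧ x ≠ 0 ∧ r = ‖x‖ / ‖j x‖}
  /-- sparse density: `⋃_{k ≥ 1} kA` is dense in `H1` -/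
  sparse_dense : Dense (⋃ k : ℕ, {u : H1 | ∃ f : Fin (k + 1) → M,
    (∀ n, f n ∈ ⋃ i : I, (Asub i : Set M)) ∧ u = ∑ n, j (f n)})

namespace SparseApproxTriple

variable {H1 : Type*} [NormedAddCommGroup H1] [InnerProductSpace ℝ H1]
  {M : Type*} [NormedAddCommGroup M] [NormedSpace ℝ M] {I : Type*}

/-- The union `A = ⋃ i, A_i`, as a subset of `M`. -/
def A (S : SparseApproxTriple H1 M I) : Set M := ⋃ i : I, (S.Asub i : Set M)

/-- `σ_{A,M}(x) := inf_{z ∈ A} ‖x − z‖_M`, the best sparse approximation error. -/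
noncomputable def sigma (S : SparseApproxTriple H1 M I) (x : M) : ℝ :=
  sInf ((fun z => ‖x - z‖) '' S.A)

/-- The sparsity `s_A := (sup_{0 ≠ x ∈ A} ‖x‖_M/‖x‖_{H1})²`. -/
noncomputable def sA (S : SparseApproxTriple H1 M I) : ℝ :=
  (sSup {r : ℝ | ∃ x : M, x ∈ S.A ∧ x ≠ 0 ∧ r = ‖x‖ / ‖S.j x‖}) ^ 2

/-- The sparse approximation ratio
`a_A := sup_{0 ≠ x ∈ M} (‖u_{A,M}‖_{H1}/‖x_{A,M}‖_M)²`, where `x_{A,M}` is a best approximator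
of `x` in `A` and `u_{A,M}` a best approximator of `x − x_{A,M}` in `A` (both w.r.t. the norm of
`M`). -/
noncomputable def aA (S : SparseApproxTriple H1 M I) : ℝ :=
  sSup {r : ℝ | ∃ x xa u : M, x ≠ 0 ∧ IsBestApprox S.A x xa ∧
    IsBestApprox S.A (x - xa) u ∧ r = (‖S.j u‖ / ‖xa‖) ^ 2}

/-- `kA := {x₁ + ⋯ + x_k : x₁, …, x_k ∈ A}`. -/
def sumSet (S : SparseApproxTriple H1 M I) (k : ℕ) : Set M :=
  {x : M | ∃ f : Fin k → M, (∀ n, f n ∈ S.A) ∧ x = ∑ n, f n}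

end SparseApproxTriple

open RealInnerProductSpace in
lemma inner_zero_of_norm_le {E : Type*} [NormedAddCommGroup E] [InnerProductSpace ℝ E]
    (u v : E) (h : ∀ c : ℝ, ‖u‖ ≤ ‖u - c • v‖) : ⟪u, v⟫ = 0 := by
  by_contra hne
  have hv : v ≠ 0 := by rintro rfl; simp at hne
  have hv2 : (0:ℝ) < ‖v‖ ^ 2 := pow_pos (norm_pos_iff.mpr hv) 2
  set c : ℝ := ⟪u, v⟫ / ‖v‖ ^ 2 with hc
  have hle := h c
  have hexp : ‖u - c • v‖ ^ 2 = ‖u‖ ^ 2 - 2 * c * ⟪u, v⟫ + c ^ 2 * ‖v‖ ^ 2 := by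
    rw [norm_sub_sq_real, real_inner_smul_right, norm_smul]
    ring_nf
    rw [Real.norm_eq_abs, sq_abs]
  have hc2 : c * ⟪u, v⟫ = ⟪u, v⟫ ^ 2 / ‖v‖ ^ 2 := by
    rw [hc]; field_simp
  have hc3 : c ^ 2 * ‖v‖ ^ 2 = ⟪u, v⟫ ^ 2 / ‖v‖ ^ 2 := by
    rw [hc]; field_simp
  have h2 : ‖u‖ ^ 2 ≤ ‖u - c • v‖ ^ 2 := by
    nlinarith [norm_nonneg u, norm_nonneg (u - c • v)]
  rw [hexp] at h2
  have hX : ⟪u, v⟫ ^ 2 / ‖v‖ ^ 2 ≤ 0 := by nlinarith [h2, hc2, hc3]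
  have h4 : 0 < ⟪u, v⟫ ^ 2 := by
    have : ⟪u, v⟫ ≠ 0 := hne
    positivity
  have : 0 < ⟪u, v⟫ ^ 2 / ‖v‖ ^ 2 := by positivity
  linarith

namespace SparseApproxTriple

variable {H1 : Type*} [NormedAddCommGroup H1] [InnerProductSpace ℝ H1]
  {M : Type*} [NormedAddCommGroup M] [NormedSpace ℝ M] {I : Type*}
  (S : SparseApproxTriple H1 M I)

lemma zero_mem_A : (0 : M) ∈ S.A := by
  obtain ⟨i⟩ := S.index_nonempty
  exact Set.mem_iUnion.mpr ⟨i, (S.Asub i).zero_mem⟩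

lemma A_nonempty : S.A.Nonempty := ⟨0, S.zero_mem_A⟩

lemma Asub_subset_A (i : I) : (S.Asub i : Set M) ⊆ S.A :=
  Set.subset_iUnion (fun i => (S.Asub i : Set M)) i

lemma exists_idx {x : M} (hx : x ∈ S.A) : ∃ i, x ∈ S.Asub i := Set.mem_iUnion.mp hx

/-- best approximator onto `A`. -/
noncomputable def bA (x : M) : M := (S.prox S.A S.A_nonempty S.A_closed x).choose

lemma bA_mem (x : M) : S.bA x ∈ S.A := (S.prox S.A S.A_nonempty S.A_closed x).choose_spec.1

lemma bA_best (x : M) : ∀ z ∈ S.A, ‖x - S.bA x‖ ≤ ‖x - z‖ :=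
  (S.prox S.A S.A_nonempty S.A_closed x).choose_spec.2

/-- best approximator onto `Asub i`. -/
noncomputable def bI (i : I) (x : M) : M :=
  (S.prox (S.Asub i) ⟨0, (S.Asub i).zero_mem⟩ (S.Asub_closed i) x).choose

lemma bI_mem (i : I) (x : M) : S.bI i x ∈ S.Asub i :=
  (S.prox (S.Asub i) ⟨0, (S.Asub i).zero_mem⟩ (S.Asub_closed i) x).choose_spec.1

lemma bI_best (i : I) (x : M) : ∀ z ∈ S.Asub i, ‖x - S.bI i x‖ ≤ ‖x - z‖ :=
  (S.prox (S.Asub i) ⟨0, (S.Asub i).zero_mem⟩ (S.Asub_closed i) x).choose_spec.2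

lemma splitM_bA (x : M) : ‖x‖ = ‖S.bA x‖ + ‖x - S.bA x‖ := by
  obtain ⟨i, hi⟩ := S.exists_idx (S.bA_mem x)
  exact S.norm_split_M i x _ hi (fun z hz => S.bA_best x z (S.Asub_subset_A i hz))

lemma splitM_bI (i : I) (x : M) : ‖x‖ = ‖S.bI i x‖ + ‖x - S.bI i x‖ :=
  S.norm_split_M i x _ (S.bI_mem i x) (S.bI_best i x)

open RealInnerProductSpace in
lemma orth_of_zero_best (i : I) (x : M) (hx : ∀ z ∈ S.Asub i, ‖x‖ ≤ ‖x - z‖) :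
    ∀ z ∈ S.Asub i, ⟪S.j x, S.j z⟫ = 0 := by
  intro z hz
  have hb : ∀ w ∈ S.Asub i, ‖S.j x - S.j 0‖ ≤ ‖S.j x - S.j w‖ :=
    S.common_best i x 0 (S.Asub i).zero_mem (by simpa using hx)
  refine inner_zero_of_norm_le _ _ (fun c => ?_)
  have := hb (c • z) ((S.Asub i).smul_mem c hz)
  simpa [map_smul] using this

lemma sA_nonneg : 0 ≤ S.sA := sq_nonneg _

lemma aA_nonneg : 0 ≤ S.aA := Real.sSup_nonneg (by
  rintro r ⟨x, xa, u, hx, hxa, hu, rfl⟩; positivity)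

lemma norm_le_sqrt_sA {x : M} (hx : x ∈ S.A) : ‖x‖ ≤ Real.sqrt S.sA * ‖S.j x‖ := by
  rcases eq_or_ne x 0 with rfl | hx0
  · simp
  have hjx : S.j x ≠ 0 := fun h => hx0 (S.j_inj (by simpa using h))
  have hjx' : (0:ℝ) < ‖S.j x‖ := norm_pos_iff.mpr hjx
  set B := sSup {r : ℝ | ∃ y : M, y ∈ S.A ∧ y ≠ 0 ∧ r = ‖y‖ / ‖S.j y‖} with hB
  have hmem : ‖x‖ / ‖S.j x‖ ∈ {r : ℝ | ∃ y : M, y ∈ S.A ∧ y ≠ 0 ∧ r = ‖y‖ / ‖S.j y‖} :=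
    ⟨x, hx, hx0, rfl⟩
  have hle : ‖x‖ / ‖S.j x‖ ≤ B := le_csSup S.sA_bddAbove hmem
  have hB0 : 0 ≤ B := le_trans (by positivity) hle
  have hsq : Real.sqrt S.sA = B := by
    rw [sA, Real.sqrt_sq hB0]
  rw [hsq]
  rw [div_le_iff₀ hjx'] at hle
  linarith
end SparseApproxTriple

namespace SparseApproxTriple

variable {H1 : Type*} [NormedAddCommGroup H1] [InnerProductSpace ℝ H1]
  {M : Type*} [NormedAddCommGroup M] [NormedSpace ℝ M] {I : Type*}
  (S : SparseApproxTriple H1 M I)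

lemma splitM_best {x y : M} (hy : y ∈ S.A) (hbest : ∀ z ∈ S.A, ‖x - y‖ ≤ ‖x - z‖) :
    ‖x‖ = ‖y‖ + ‖x - y‖ := by
  obtain ⟨i, hi⟩ := S.exists_idx hy
  exact S.norm_split_M i x y hi (fun z hz => hbest z (S.Asub_subset_A i hz))

lemma norm_u_le {x xa u : M} (hxa : IsBestApprox S.A x xa) (hu : IsBestApprox S.A (x - xa) u) :
    ‖u‖ ≤ ‖xa‖ := by
  have hsplit : ‖x - xa‖ = ‖u‖ + ‖x - xa - u‖ := S.splitM_best hu.1 hu.2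
  have h1 : ‖x - xa‖ ≤ ‖x - u‖ := hxa.2 u hu.1
  have h2 : ‖x - u‖ ≤ ‖x - xa - u‖ + ‖xa‖ := by
    have : x - u = (x - xa - u) + xa := by abel
    rw [this]; exact norm_add_le _ _
  linarith

lemma aA_bddAbove : BddAbove {r : ℝ | ∃ x xa u : M, x ≠ 0 ∧ IsBestApprox S.A x xa ∧
    IsBestApprox S.A (x - xa) u ∧ r = (‖S.j u‖ / ‖xa‖) ^ 2} := by
  refine ⟨1, ?_⟩
  rintro r ⟨x, xa, u, hx, hxa, hu, rfl⟩
  have hule : ‖u‖ ≤ ‖xa‖ := S.norm_u_le hxa hu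
  have hju : ‖S.j u‖ ≤ ‖u‖ := S.j_norm_le u
  rcases eq_or_ne xa 0 with rfl | hxa0
  · simp only [norm_zero, div_zero]
    norm_num
  · have hxa' : (0:ℝ) < ‖xa‖ := norm_pos_iff.mpr hxa0
    have : ‖S.j u‖ / ‖xa‖ ≤ 1 := by
      rw [div_le_one hxa']; linarith
    have h0 : 0 ≤ ‖S.j u‖ / ‖xa‖ := by positivity
    nlinarith

lemma norm_j_le_sqrt_aA {x xa u : M} (hx : x ≠ 0) (hxa : IsBestApprox S.A x xa)
    (hu : IsBestApprox S.A (x - xa) u) : ‖S.j u‖ ≤ Real.sqrt S.aA * ‖xa‖ := by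
  have hmem : (‖S.j u‖ / ‖xa‖) ^ 2 ∈ {r : ℝ | ∃ x xa u : M, x ≠ 0 ∧ IsBestApprox S.A x xa ∧
      IsBestApprox S.A (x - xa) u ∧ r = (‖S.j u‖ / ‖xa‖) ^ 2} := ⟨x, xa, u, hx, hxa, hu, rfl⟩
  have hle : (‖S.j u‖ / ‖xa‖) ^ 2 ≤ S.aA := le_csSup S.aA_bddAbove hmem
  rcases eq_or_ne xa 0 with rfl | hxa0
  · have : ‖u‖ ≤ (0:ℝ) := by simpa using S.norm_u_le hxa hu
    have hu0 : u = 0 := norm_le_zero_iff.mp this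
    simp [hu0]
  · have hxa' : (0:ℝ) < ‖xa‖ := norm_pos_iff.mpr hxa0
    have h1 : ‖S.j u‖ / ‖xa‖ ≤ Real.sqrt S.aA := by
      rw [← Real.sqrt_sq (by positivity : (0:ℝ) ≤ ‖S.j u‖ / ‖xa‖)]
      exact Real.sqrt_le_sqrt hle
    rw [div_le_iff₀ hxa'] at h1
    linarith

lemma best_zero_eq_zero {y : M} (hy : y ∈ S.A) (hbest : ∀ z ∈ S.A, ‖(0:M) - y‖ ≤ ‖(0:M) - z‖) :
    y = 0 := by
  have := hbest 0 S.zero_mem_A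
  simp only [sub_zero, zero_sub, norm_neg, norm_zero] at this
  exact norm_le_zero_iff.mp this

lemma mem_sumSet_two {x y : M} (hx : x ∈ S.A) (hy : y ∈ S.A) : x + y ∈ S.sumSet 2 := by
  refine ⟨![x, y], ?_, ?_⟩
  · intro n; fin_cases n <;> simpa
  · simp [Fin.sum_univ_two]

lemma A_mem_sumSet_two {x : M} (hx : x ∈ S.A) : x ∈ S.sumSet 2 := by
  simpa using S.mem_sumSet_two hx S.zero_mem_A

lemma neg_mem_A {x : M} (hx : x ∈ S.A) : -x ∈ S.A := by
  obtain ⟨i, hi⟩ := S.exists_idx hx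
  exact S.Asub_subset_A i ((S.Asub i).neg_mem hi)

lemma smul_mem_sumSet {k : ℕ} {x : M} (hx : x ∈ S.sumSet k) (c : ℝ) : c • x ∈ S.sumSet k := by
  obtain ⟨f, hf, rfl⟩ := hx
  refine ⟨fun n => c • f n, fun n => ?_, ?_⟩
  · obtain ⟨i, hi⟩ := S.exists_idx (hf n)
    exact S.Asub_subset_A i ((S.Asub i).smul_mem c hi)
  · rw [Finset.smul_sum]

lemma sumSet_two_add_A_mem {x y : M} (hx : x ∈ S.sumSet 2) (hy : y ∈ S.A) :
    x + y ∈ S.sumSet 4 := by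
  obtain ⟨f, hf, rfl⟩ := hx
  refine ⟨![f 0, f 1, y, 0], ?_, ?_⟩
  · intro n; fin_cases n <;> simp [hf 0, hf 1, hy, S.zero_mem_A]
  · simp [Fin.sum_univ_four, Fin.sum_univ_two]

end SparseApproxTriple

namespace SparseApproxTriple

variable {H1 : Type*} [NormedAddCommGroup H1] [InnerProductSpace ℝ H1]
  {H2 : Type*} [NormedAddCommGroup H2] [InnerProductSpace ℝ H2]
  {M : Type*} [NormedAddCommGroup M] [NormedSpace ℝ M] {I : Type*}
  (S : SparseApproxTriple H1 M I)

lemma smul_mem_A {x : M} (hx : x ∈ S.A) (c : ℝ) : c • x ∈ S.A := by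
  obtain ⟨i, hi⟩ := S.exists_idx hx
  exact S.Asub_subset_A i ((S.Asub i).smul_mem c hi)

open RealInnerProductSpace in
lemma cross_bound (T : H1 →L[ℝ] H2) (δ₄ : ℝ)
    (hRIP4 : ∀ z ∈ S.sumSet 4,
      (1 - δ₄) * ‖S.j z‖ ^ 2 ≤ ‖T (S.j z)‖ ^ 2 ∧ ‖T (S.j z)‖ ^ 2 ≤ (1 + δ₄) * ‖S.j z‖ ^ 2)
    {z w : M} (hz : z ∈ S.sumSet 2) (hw : w ∈ S.A) (horth : ⟪S.j z, S.j w⟫ = 0) :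
    |⟪T (S.j z), T (S.j w)⟫| ≤ δ₄ * (‖S.j z‖ * ‖S.j w‖) := by
  rcases eq_or_ne (S.j z) 0 with hz0 | hz0
  · simp [hz0]
  rcases eq_or_ne (S.j w) 0 with hw0 | hw0
  · simp [hw0]
  have hZ : (0:ℝ) < ‖S.j z‖ := norm_pos_iff.mpr hz0
  have hW : (0:ℝ) < ‖S.j w‖ := norm_pos_iff.mpr hw0
  set z' : M := ‖S.j z‖⁻¹ • z with hz'
  set w' : M := ‖S.j w‖⁻¹ • w with hw'
  have hjz' : S.j z' = ‖S.j z‖⁻¹ • S.j z := by rw [hz', map_smul]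
  have hjw' : S.j w' = ‖S.j w‖⁻¹ • S.j w := by rw [hw', map_smul]
  have hnz' : ‖S.j z'‖ = 1 := by
    rw [hjz', norm_smul, norm_inv, norm_norm, inv_mul_cancel₀ hZ.ne']
  have hnw' : ‖S.j w'‖ = 1 := by
    rw [hjw', norm_smul, norm_inv, norm_norm, inv_mul_cancel₀ hW.ne']
  have horth' : ⟪S.j z', S.j w'⟫ = 0 := by
    rw [hjz', hjw', real_inner_smul_left, real_inner_smul_right, horth]; ring
  have hmem1 : z' + w' ∈ S.sumSet 4 :=
    S.sumSet_two_add_A_mem (S.smul_mem_sumSet hz _) (S.smul_mem_A hw _)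
  have hmem2 : z' - w' ∈ S.sumSet 4 := by
    have : z' - w' = z' + (-w') := by abel
    rw [this]
    exact S.sumSet_two_add_A_mem (S.smul_mem_sumSet hz _) (S.neg_mem_A (S.smul_mem_A hw _))
  have hadd : ‖S.j (z' + w')‖ ^ 2 = 2 := by
    rw [map_add, norm_add_sq_real, horth', hnz', hnw']; ring
  have hsub : ‖S.j (z' - w')‖ ^ 2 = 2 := by
    rw [map_sub, norm_sub_sq_real, horth', hnz', hnw']; ring
  have h1 := hRIP4 _ hmem1
  have h2 := hRIP4 _ hmem2
  rw [hadd] at h1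
  rw [hsub] at h2
  have hT1 : ‖T (S.j (z' + w'))‖ ^ 2 = ‖T (S.j z') + T (S.j w')‖ ^ 2 := by rw [map_add, map_add]
  have hT2 : ‖T (S.j (z' - w'))‖ ^ 2 = ‖T (S.j z') - T (S.j w')‖ ^ 2 := by rw [map_sub, map_sub]
  rw [hT1] at h1
  rw [hT2] at h2
  rw [norm_add_sq_real] at h1
  rw [norm_sub_sq_real] at h2
  have hkey : |⟪T (S.j z'), T (S.j w')⟫| ≤ δ₄ := by
    rw [abs_le]; constructor <;> nlinarith [h1.1, h1.2, h2.1, h2.2]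
  have hscale : ⟪T (S.j z), T (S.j w)⟫ =
      ‖S.j z‖ * ‖S.j w‖ * ⟪T (S.j z'), T (S.j w')⟫ := by
    rw [hjz', hjw', map_smul, map_smul, real_inner_smul_left, real_inner_smul_right]
    field_simp
  rw [hscale, abs_mul, abs_of_nonneg (by positivity : (0:ℝ) ≤ ‖S.j z‖ * ‖S.j w‖)]
  calc ‖S.j z‖ * ‖S.j w‖ * |⟪T (S.j z'), T (S.j w')⟫| ≤ ‖S.j z‖ * ‖S.j w‖ * δ₄ := by
        apply mul_le_mul_of_nonneg_left hkey (by positivity)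
    _ = δ₄ * (‖S.j z‖ * ‖S.j w‖) := by ring

end SparseApproxTriple

set_option maxHeartbeats 4000000 in
open RealInnerProductSpace Filter Topology in
/-- Let `T` satisfy the restricted isometry property on `2A` and `4A` with
constants `δ₂, δ₄`, and let `F` be continuous with `F(0) = 0`, `γ₂ := γ_{F,T}(2A)`,
`γ₄ := γ_{F,T}(4A)`, and `√2(√δ₂ + γ₂) + 4γ₄ + (√δ₂ + 3γ₂ + 4√δ₄)√(a_A s_A) < 1`.  Then there are
constants `C₁, C₂ > 0`, independent of `x⁰` and `ε`, such that the minimizer `x⁰_M` of `‖·‖_M`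
over `{x̂ : ‖F(x̂) − F(x⁰)‖ ≤ ε}` satisfies
`‖x⁰_M − x⁰‖_{H1} ≤ C₁√a_A·σ_{A,M}(x⁰) + C₂ε` and
`‖x⁰_M − x⁰‖_M ≤ C₁σ_{A,M}(x⁰) + C₂√s_A·ε`. -/
theorem sparse_recovery_nonlinear_rip
    {H1 : Type*} [NormedAddCommGroup H1] [InnerProductSpace ℝ H1] [CompleteSpace H1]
    {H2 : Type*} [NormedAddCommGroup H2] [InnerProductSpace ℝ H2] [CompleteSpace H2]
    {M : Type*} [NormedAddCommGroup M] [NormedSpace ℝ M] [CompleteSpace M]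
    {I : Type*} (S : SparseApproxTriple H1 M I)
    (T : H1 →L[ℝ] H2)
    (δ₂ δ₄ : ℝ) (hδ₂0 : 0 ≤ δ₂) (hδ₂1 : δ₂ < 1) (hδ₄0 : 0 ≤ δ₄) (hδ₄1 : δ₄ < 1)
    (hRIP2 : ∀ z ∈ S.sumSet 2,
      (1 - δ₂) * ‖S.j z‖ ^ 2 ≤ ‖T (S.j z)‖ ^ 2 ∧ ‖T (S.j z)‖ ^ 2 ≤ (1 + δ₂) * ‖S.j z‖ ^ 2)
    (hRIP4 : ∀ z ∈ S.sumSet 4,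
      (1 - δ₄) * ‖S.j z‖ ^ 2 ≤ ‖T (S.j z)‖ ^ 2 ∧ ‖T (S.j z)‖ ^ 2 ≤ (1 + δ₄) * ‖S.j z‖ ^ 2)
    (F : H1 → H2) (hFcont : Continuous F) (hF0 : F 0 = 0)
    (γ₂ γ₄ : ℝ) (hγ₂0 : 0 ≤ γ₂) (hγ₄0 : 0 ≤ γ₄)
    (hγ₂ : ∀ x : M, ∀ z ∈ S.sumSet 2,
      ‖F (S.j x + S.j z) - F (S.j x) - T (S.j z)‖ ≤ γ₂ * ‖S.j z‖)
    (hγ₄ : ∀ x : M, ∀ z ∈ S.sumSet 4,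
      ‖F (S.j x + S.j z) - F (S.j x) - T (S.j z)‖ ≤ γ₄ * ‖S.j z‖)
    (hsmall : Real.sqrt 2 * (Real.sqrt δ₂ + γ₂) + 4 * γ₄ +
      (Real.sqrt δ₂ + 3 * γ₂ + 4 * Real.sqrt δ₄) * Real.sqrt (S.aA * S.sA) < 1) :
    ∃ C₁ C₂ : ℝ, 0 < C₁ ∧ 0 < C₂ ∧
      ∀ (x0 : M) (ε : ℝ), 0 < ε →
        ∀ xm : M, ‖F (S.j xm) - F (S.j x0)‖ ≤ ε →
          (∀ y : M, ‖F (S.j y) - F (S.j x0)‖ ≤ ε → ‖xm‖ ≤ ‖y‖) →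
          ‖S.j xm - S.j x0‖ ≤ C₁ * Real.sqrt S.aA * S.sigma x0 + C₂ * ε ∧
          ‖xm - x0‖ ≤ C₁ * S.sigma x0 + C₂ * Real.sqrt S.sA * ε := by
  classical
  -- abbreviations
  set sa := Real.sqrt S.aA with hsa_def
  set ss := Real.sqrt S.sA with hss_def
  have hsa0 : 0 ≤ sa := Real.sqrt_nonneg _
  have hss0 : 0 ≤ ss := Real.sqrt_nonneg _
  have hρeq : Real.sqrt (S.aA * S.sA) = sa * ss := by
    rw [hsa_def, hss_def, Real.sqrt_mul S.aA_nonneg]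
  set ρ := sa * ss with hρ_def
  have hρ0 : 0 ≤ ρ := mul_nonneg hsa0 hss0
  set e2 := Real.sqrt (1 + δ₂) with he2_def
  have he2_pos : 0 < e2 := Real.sqrt_pos.mpr (by linarith)
  have he2_le : e2 ≤ Real.sqrt 2 := Real.sqrt_le_sqrt (by linarith)
  have hs2_le : Real.sqrt 2 ≤ 2 := by
    nlinarith [Real.sq_sqrt (by norm_num : (0:ℝ) ≤ 2), Real.sqrt_nonneg 2]
  have hs2_ge : 1 ≤ Real.sqrt 2 := by
    nlinarith [Real.sq_sqrt (by norm_num : (0:ℝ) ≤ 2), Real.sqrt_nonneg 2]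
  -- the key positive constant
  set c := 1 - δ₂ - e2 * γ₂ - (e2 * γ₂ + δ₄) * ρ with hc_def
  have hδ₂sqrt : δ₂ ≤ Real.sqrt δ₂ := by
    nlinarith [Real.sq_sqrt hδ₂0, Real.sqrt_nonneg δ₂, Real.sqrt_le_one.mpr hδ₂1.le]
  have hδ₄sqrt : δ₄ ≤ Real.sqrt δ₄ := by
    nlinarith [Real.sq_sqrt hδ₄0, Real.sqrt_nonneg δ₄, Real.sqrt_le_one.mpr hδ₄1.le]
  have hc : 0 < c := by
    rw [hρeq] at hsmall
    have t1 : δ₂ ≤ Real.sqrt 2 * Real.sqrt δ₂ := by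
      nlinarith [Real.sqrt_nonneg δ₂]
    have t2 : e2 * γ₂ ≤ Real.sqrt 2 * γ₂ := mul_le_mul_of_nonneg_right he2_le hγ₂0
    have t3 : e2 * γ₂ * ρ ≤ 3 * γ₂ * ρ := by
      apply mul_le_mul_of_nonneg_right _ hρ0
      nlinarith
    have t4 : δ₄ * ρ ≤ 4 * Real.sqrt δ₄ * ρ := by
      apply mul_le_mul_of_nonneg_right _ hρ0
      nlinarith [Real.sqrt_nonneg δ₄]
    have t5 : 0 ≤ 4 * γ₄ := by linarith
    have t6 : 0 ≤ Real.sqrt δ₂ * ρ := mul_nonneg (Real.sqrt_nonneg _) hρ0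
    have hexp : (e2 * γ₂ + δ₄) * ρ = e2 * γ₂ * ρ + δ₄ * ρ := by ring
    rw [hc_def, hexp]
    nlinarith [hsmall]
  set P := e2 / c with hP_def
  set Q := 2 * (e2 * γ₂ + δ₄) / c with hQ_def
  have hQnum : 0 ≤ 2 * (e2 * γ₂ + δ₄) := by positivity
  have hP : 0 < P := div_pos he2_pos hc
  have hQ : 0 ≤ Q := div_nonneg hQnum hc.le
  clear_value sa ss ρ e2 c P Q
  refine ⟨(1 + ρ) * Q + 2 * Q * ρ + 3, (3 + ρ) * P + 1, by nlinarith [hQ, hρ0],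
    by nlinarith [hP, hρ0], ?_⟩
  intro x0 ε hε xm hfeas hmin
  have hxm0 : ‖xm‖ ≤ ‖x0‖ := hmin x0 (by simpa using hε.le)
  -- best approximation of x0
  set xA := S.bA x0 with hxA_def
  set σ := ‖x0 - xA‖ with hσ_def
  have hσ0 : 0 ≤ σ := norm_nonneg _
  have hsigma_eq : S.sigma x0 = σ := by
    refine IsLeast.csInf_eq ⟨⟨xA, S.bA_mem x0, rfl⟩, ?_⟩
    rintro r ⟨z, hzA, rfl⟩
    exact S.bA_best x0 z hzA
  obtain ⟨i0, hi0⟩ := S.exists_idx (S.bA_mem x0)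
  rw [← hxA_def] at hi0
  set h := xm - x0 with hh_def
  set h' := S.bI i0 h with hh'_def
  have hh'mem : h' ∈ S.Asub i0 := S.bI_mem i0 h
  have hh'best : ∀ z ∈ S.Asub i0, ‖h - h'‖ ≤ ‖h - z‖ := S.bI_best i0 h
  set h'' := h - h' with hh''_def
  -- cone constraint
  have hcone : ‖h''‖ ≤ ‖h'‖ + 2 * σ := by
    have hbest2 : ∀ z ∈ S.Asub i0, ‖(xA + h) - (xA + h')‖ ≤ ‖(xA + h) - z‖ := by
      intro z hz
      have e1 : (xA + h) - z = h - (z - xA) := by abel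
      have e2 : (xA + h) - (xA + h') = h - h' := by abel
      rw [e1, e2]
      exact hh'best (z - xA) (Submodule.sub_mem _ hz hi0)
    have hsplit : ‖xA + h‖ = ‖xA + h'‖ + ‖(xA + h) - (xA + h')‖ :=
      S.norm_split_M i0 _ _ (Submodule.add_mem _ hi0 hh'mem) hbest2
    have heq : (xA + h) - (xA + h') = h'' := by rw [hh''_def]; abel
    rw [heq] at hsplit
    have e1 : ‖xm‖ = ‖x0 + h‖ := by rw [hh_def]; congr 1; abel
    have e2 : ‖xA + h‖ ≤ ‖x0 + h‖ + σ := by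
      have e : xA + h = (x0 + h) + (xA - x0) := by abel
      rw [e]
      calc ‖(x0 + h) + (xA - x0)‖ ≤ ‖x0 + h‖ + ‖xA - x0‖ := norm_add_le _ _
        _ = ‖x0 + h‖ + σ := by rw [hσ_def, norm_sub_rev]
    have e3 : ‖x0‖ ≤ ‖xA‖ + σ := by
      calc ‖x0‖ = ‖xA + (x0 - xA)‖ := by congr 1; abel
        _ ≤ ‖xA‖ + σ := by rw [hσ_def]; exact norm_add_le _ _
    have e4 : ‖xA‖ ≤ ‖xA + h'‖ + ‖h'‖ := by
      calc ‖xA‖ = ‖(xA + h') - h'‖ := by congr 1; abel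
        _ ≤ ‖xA + h'‖ + ‖h'‖ := norm_sub_le _ _
    linarith only [hxm0, hsplit, e1, e2, e3, e4]
  clear_value xA σ h h' h''
  -- the greedy decomposition of h''
  let r : ℕ → M := fun n => Nat.rec h'' (fun _ rn => rn - S.bA rn) n
  let t : ℕ → M := fun n => S.bA (r n)
  have hr0 : r 0 = h'' := rfl
  have hrsucc : ∀ n, r (n + 1) = r n - t n := fun n => rfl
  have htmem : ∀ n, t n ∈ S.A := fun n => S.bA_mem (r n)
  have htbest : ∀ n, ∀ z ∈ S.A, ‖r n - t n‖ ≤ ‖r n - z‖ := fun n => S.bA_best (r n)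
  have hsplitM : ∀ n, ‖r n‖ = ‖t n‖ + ‖r (n + 1)‖ := by
    intro n
    rw [hrsucc n]
    exact S.splitM_bA (r n)
  choose iT hiT using fun n => S.exists_idx (htmem n)
  clear_value t r
  -- the "zero is a best approximator" claims
  have hZstep : ∀ (i : I) (m : ℕ), (∀ z ∈ S.Asub i, ‖r m‖ ≤ ‖r m - z‖) →
      (∀ z ∈ S.Asub i, ‖r (m + 1)‖ ≤ ‖r (m + 1) - z‖) := by
    intro i m hm z hz
    have h1 : ‖r m - z‖ ≤ ‖r (m + 1) - z‖ + ‖t m‖ := by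
      have e : r m - z = (r (m + 1) - z) + t m := by rw [hrsucc]; abel
      rw [e]; exact norm_add_le _ _
    have h2 := hm z hz
    have h3 := hsplitM m
    linarith only [h1, h2, h3]
  have hZiter : ∀ (i : I) (m : ℕ), (∀ z ∈ S.Asub i, ‖r m‖ ≤ ‖r m - z‖) →
      ∀ n, m ≤ n → (∀ z ∈ S.Asub i, ‖r n‖ ≤ ‖r n - z‖) := by
    intro i m hm n
    induction n with
    | zero => intro hn; rw [Nat.le_zero] at hn; subst hn; exact hm
    | succ k ih =>
      intro hk
      rcases Nat.lt_or_ge m (k + 1) with hlt | hge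
      · exact hZstep i k (ih (Nat.lt_succ_iff.mp hlt))
      · have : m = k + 1 := le_antisymm hk hge
        subst this; exact hm
  have hZ0 : ∀ z ∈ S.Asub i0, ‖r 0‖ ≤ ‖r 0 - z‖ := by
    intro z hz
    have e1 : h'' - z = h - (h' + z) := by rw [hh''_def]; abel
    calc ‖r 0‖ = ‖h''‖ := by rw [hr0]
      _ ≤ ‖h - (h' + z)‖ := hh'best (h' + z) (Submodule.add_mem _ hh'mem hz)
      _ = ‖r 0 - z‖ := by rw [hr0, e1]
  have hZbase : ∀ k, ∀ z ∈ S.Asub (iT k), ‖r (k + 1)‖ ≤ ‖r (k + 1) - z‖ := by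
    intro k z hz
    have hmem : t k + z ∈ S.A := S.Asub_subset_A (iT k) (Submodule.add_mem _ (hiT k) hz)
    have e1 : r (k + 1) - z = r k - (t k + z) := by rw [hrsucc]; abel
    calc ‖r (k + 1)‖ = ‖r k - t k‖ := by rw [hrsucc]
      _ ≤ ‖r k - (t k + z)‖ := htbest k (t k + z) hmem
      _ = ‖r (k + 1) - z‖ := by rw [e1]
  -- orthogonality relations
  have horthr : ∀ (i : I) (n : ℕ), (∀ z ∈ S.Asub i, ‖r n‖ ≤ ‖r n - z‖) →
      ∀ z ∈ S.Asub i, ⟪S.j (r n), S.j z⟫ = 0 := fun i n hn => S.orth_of_zero_best i (r n) hn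
  have hoh'r : ∀ n, ⟪S.j (r n), S.j h'⟫ = 0 := fun n =>
    horthr i0 n (hZiter i0 0 hZ0 n (Nat.zero_le n)) h' hh'mem
  have hotr : ∀ k n, k + 1 ≤ n → ⟪S.j (r n), S.j (t k)⟫ = 0 := fun k n hkn =>
    horthr (iT k) n (hZiter (iT k) (k + 1) (hZbase k) n hkn) (t k) (hiT k)
  have hjt_eq : ∀ n, S.j (t n) = S.j (r n) - S.j (r (n + 1)) := by
    intro n
    have : S.j (r (n + 1)) = S.j (r n) - S.j (t n) := by rw [hrsucc n, map_sub]
    rw [this]; abel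
  have hoh't : ∀ n, ⟪S.j h', S.j (t n)⟫ = 0 := by
    intro n
    have h1 : ⟪S.j h', S.j (r n)⟫ = 0 := by rw [real_inner_comm]; exact hoh'r n
    have h2 : ⟪S.j h', S.j (r (n + 1))⟫ = 0 := by rw [real_inner_comm]; exact hoh'r (n + 1)
    rw [hjt_eq n, inner_sub_right, h1, h2, sub_zero]
  have hott : ∀ k n, k < n → ⟪S.j (t k), S.j (t n)⟫ = 0 := by
    intro k n hkn
    have h1 : ⟪S.j (t k), S.j (r n)⟫ = 0 := by rw [real_inner_comm]; exact hotr k n hkn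
    have h2 : ⟪S.j (t k), S.j (r (n + 1))⟫ = 0 := by
      rw [real_inner_comm]; exact hotr k (n + 1) (le_trans hkn (Nat.le_succ n))
    rw [hjt_eq n, inner_sub_right, h1, h2, sub_zero]
  -- summability
  have hsum_partial : ∀ n, ∑ k ∈ Finset.range n, ‖t k‖ + ‖r n‖ = ‖h''‖ := by
    intro n
    induction n with
    | zero => simp [hr0]
    | succ m ih =>
      rw [Finset.sum_range_succ]
      have := hsplitM m
      linarith only [ih, this]
  have hsum_le : ∀ n, ∑ k ∈ Finset.range n, ‖t k‖ ≤ ‖h''‖ := by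
    intro n
    have h1 := hsum_partial n
    have h2 := norm_nonneg (r n)
    linarith only [h1, h2]
  have hsummable_t : Summable (fun n => ‖t n‖) :=
    summable_of_sum_range_le (fun n => norm_nonneg _) hsum_le
  have htsum_t_le : ∑' n, ‖t n‖ ≤ ‖h''‖ :=
    Summable.tsum_le_of_sum_range_le hsummable_t hsum_le
  have hsummable_jt_norm : Summable (fun n => ‖S.j (t n)‖) :=
    Summable.of_nonneg_of_le (fun n => norm_nonneg _) (fun n => S.j_norm_le (t n)) hsummable_t
  have hsummable_jt : Summable (fun n => S.j (t n)) := hsummable_jt_norm.of_norm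
  have hjr_eq : ∀ n, S.j (r n) = S.j h'' - ∑ k ∈ Finset.range n, S.j (t k) := by
    intro n
    induction n with
    | zero => simp [hr0]
    | succ m ih =>
      rw [Finset.sum_range_succ, hrsucc m, map_sub, ih]
      abel
  have hjr_tend : Tendsto (fun n => S.j (r n)) atTop (nhds (S.j h'' - ∑' k, S.j (t k))) := by
    have h1 : Tendsto (fun n => ∑ k ∈ Finset.range n, S.j (t k)) atTop
        (nhds (∑' k, S.j (t k))) := hsummable_jt.hasSum.tendsto_sum_nat
    have h2 := h1.const_sub (S.j h'')
    refine h2.congr (fun n => (hjr_eq n).symm)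
  -- the residual limit vanishes
  have hrinf : S.j h'' = ∑' k, S.j (t k) := by
    set L := S.j h'' - ∑' k, S.j (t k) with hL_def
    have hinnerA : ∀ z ∈ S.A, ⟪L, S.j z⟫ = 0 := by
      intro z hzA
      obtain ⟨i, hi⟩ := S.exists_idx hzA
      have hbound : ∀ n, |⟪S.j (r n), S.j z⟫| ≤ ‖t n‖ * ‖S.j z‖ := by
        intro n
        set w := S.bI i (r n) with hw_def
        have hworthz : ⟪S.j (r n) - S.j w, S.j z⟫ = 0 := by
          apply inner_zero_of_norm_le
          intro cc
          have hb := S.common_best i (r n) w (S.bI_mem i (r n)) (S.bI_best i (r n))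
            (w + cc • z) (Submodule.add_mem _ (S.bI_mem i (r n)) ((S.Asub i).smul_mem cc hi))
          have e : S.j (r n) - S.j (w + cc • z) = (S.j (r n) - S.j w) - cc • S.j z := by
            rw [map_add, map_smul]; abel
          rw [e] at hb
          exact hb
        have h1 : ⟪S.j (r n), S.j z⟫ = ⟪S.j w, S.j z⟫ := by
          rw [inner_sub_left] at hworthz
          linarith only [hworthz]
        have hwle : ‖w‖ ≤ ‖t n‖ := by
          have hs := S.splitM_bI i (r n)
          have hb2 : ‖r n - t n‖ ≤ ‖r n - w‖ :=
            htbest n w (S.Asub_subset_A i (S.bI_mem i (r n)))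
          have hb3 := hsplitM n
          have hb4 := norm_nonneg (r (n + 1))
          have hb5 : ‖r n - t n‖ = ‖r (n + 1)‖ := by rw [hrsucc n]
          rw [← hw_def] at hs
          linarith only [hs, hb2, hb3, hb4, hb5]
        calc |⟪S.j (r n), S.j z⟫| = |⟪S.j w, S.j z⟫| := by rw [h1]
          _ ≤ ‖S.j w‖ * ‖S.j z‖ := abs_real_inner_le_norm _ _
          _ ≤ ‖t n‖ * ‖S.j z‖ := by
              exact mul_le_mul_of_nonneg_right (le_trans (S.j_norm_le w) hwle)
                (norm_nonneg (S.j z))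
      have htend1 : Tendsto (fun n => ⟪S.j (r n), S.j z⟫) atTop (nhds ⟪L, S.j z⟫) :=
        hjr_tend.inner tendsto_const_nhds
      have htend2 : Tendsto (fun n => ‖t n‖ * ‖S.j z‖) atTop (nhds 0) := by
        simpa using hsummable_t.tendsto_atTop_zero.mul_const ‖S.j z‖
      have htend3 : Tendsto (fun n => ⟪S.j (r n), S.j z⟫) atTop (nhds 0) :=
        squeeze_zero_norm (fun n => by simpa [Real.norm_eq_abs] using hbound n) htend2
      exact tendsto_nhds_unique htend1 htend3
    have hsub : (⋃ k : ℕ, {u : H1 | ∃ f : Fin (k + 1) → M,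
        (∀ n, f n ∈ ⋃ i : I, (S.Asub i : Set M)) ∧ u = ∑ n, S.j (f n)}) ⊆
        {u : H1 | ⟪L, u⟫ = 0} := by
      rintro u hu
      rw [Set.mem_iUnion] at hu
      obtain ⟨k, f, hf, rfl⟩ := hu
      simp only [Set.mem_setOf_eq]
      rw [inner_sum]
      exact Finset.sum_eq_zero (fun n _ => hinnerA (f n) (hf n))
    have hcl : IsClosed {u : H1 | ⟪L, u⟫ = 0} :=
      isClosed_eq (Continuous.inner continuous_const continuous_id) continuous_const
    have hLL : ⟪L, L⟫ = 0 := by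
      have h1 := closure_minimal hsub hcl
      rw [S.sparse_dense.closure_eq] at h1
      exact h1 (Set.mem_univ L)
    have : L = 0 := inner_self_eq_zero.mp hLL
    rw [hL_def] at this
    exact sub_eq_zero.mp this
  -- the decomposition of j h
  set η := h' + t 0 with hη_def
  have hηmem : η ∈ S.sumSet 2 := S.mem_sumSet_two (S.Asub_subset_A i0 hh'mem) (htmem 0)
  have hjη : S.j η = S.j h' + S.j (t 0) := by rw [hη_def, map_add]
  set α := ‖S.j η‖ with hα_def
  have hα0 : 0 ≤ α := norm_nonneg _
  clear_value η α
  have hsummable_jt1 : Summable (fun n => ‖S.j (t (n + 1))‖) :=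
    (summable_nat_add_iff 1).mpr hsummable_jt_norm
  have hsummable_jt1' : Summable (fun n => S.j (t (n + 1))) :=
    (summable_nat_add_iff 1).mpr hsummable_jt
  set g := ∑' k, S.j (t (k + 1)) with hg_def
  set G := ∑' n, ‖S.j (t (n + 1))‖ with hG_def
  have hG0 : 0 ≤ G := tsum_nonneg (fun n => norm_nonneg _)
  have hgG : ‖g‖ ≤ G := norm_tsum_le_tsum_norm hsummable_jt1
  have hGsum : ∀ f : ℕ → ℝ, Summable f → (∀ n, ‖S.j (t (n + 1))‖ ≤ f n) → G ≤ ∑' n, f n :=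
    fun f hf hb => hG_def ▸ Summable.tsum_le_tsum hb hsummable_jt1 hf
  clear_value g G
  have hjh_dec : S.j h = S.j η + g := by
    have e1 : S.j h = S.j h' + S.j h'' := by
      rw [hh''_def, map_sub S.j h h']; abel
    rw [e1, hrinf, Summable.tsum_eq_zero_add hsummable_jt, hjη, ← hg_def]
    abel
  -- the step bound via a_A
  have hjt_step : ∀ n, ‖S.j (t (n + 1))‖ ≤ sa * ‖t n‖ := by
    intro n
    rcases eq_or_ne (r n) 0 with h0 | h0
    · have ht0 : t n = 0 := S.best_zero_eq_zero (htmem n) (by rw [← h0]; exact htbest n)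
      have hr1 : r (n + 1) = 0 := by rw [hrsucc n, h0, ht0, sub_zero]
      have ht1 : t (n + 1) = 0 :=
        S.best_zero_eq_zero (htmem (n + 1)) (by rw [← hr1]; exact htbest (n + 1))
      rw [ht1, ht0, map_zero, norm_zero, norm_zero, mul_zero]
    · have hba : IsBestApprox S.A (r n) (t n) := ⟨htmem n, htbest n⟩
      have hbu : IsBestApprox S.A (r n - t n) (t (n + 1)) := by
        refine ⟨htmem (n + 1), ?_⟩
        rw [← hrsucc n]
        exact htbest (n + 1)
      rw [hsa_def]
      exact S.norm_j_le_sqrt_aA h0 hba hbu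
  have hG1 : G ≤ sa * ‖h''‖ := by
    calc G ≤ ∑' n, sa * ‖t n‖ := hGsum _ (hsummable_t.mul_left sa) hjt_step
      _ = sa * ∑' n, ‖t n‖ := tsum_mul_left
      _ ≤ sa * ‖h''‖ := mul_le_mul_of_nonneg_left htsum_t_le hsa0
  have hh'jle : ‖h'‖ ≤ ss * ‖S.j h'‖ := by
    rw [hss_def]
    exact S.norm_le_sqrt_sA (S.Asub_subset_A i0 hh'mem)
  have hαsq : α ^ 2 = ‖S.j h'‖ ^ 2 + ‖S.j (t 0)‖ ^ 2 := by
    rw [hα_def, hjη, norm_add_sq_real, hoh't 0]; ring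
  have hjh'le : ‖S.j h'‖ ≤ α := by
    nlinarith only [hαsq, norm_nonneg (S.j h'), norm_nonneg (S.j (t 0)), hα0]
  have hGle : G ≤ ρ * α + 2 * sa * σ := by
    have e1 : ‖h'‖ ≤ ss * α :=
      le_trans hh'jle (mul_le_mul_of_nonneg_left hjh'le hss0)
    calc G ≤ sa * ‖h''‖ := hG1
      _ ≤ sa * (ss * α + 2 * σ) := mul_le_mul_of_nonneg_left (by linarith only [hcone, e1]) hsa0
      _ = ρ * α + 2 * sa * σ := by rw [hρ_def]; ring
  -- orthogonality of η to the tail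
  have hoηt : ∀ n, ⟪S.j η, S.j (t (n + 1))⟫ = 0 := by
    intro n
    rw [hjη, inner_add_left, hoh't (n + 1), hott 0 (n + 1) (Nat.succ_pos n), add_zero]
  have hcross : ∀ n, |⟪T (S.j η), T (S.j (t (n + 1)))⟫| ≤ δ₄ * α * ‖S.j (t (n + 1))‖ := by
    intro n
    have := S.cross_bound T δ₄ hRIP4 hηmem (htmem (n + 1)) (hoηt n)
    calc |⟪T (S.j η), T (S.j (t (n + 1)))⟫| ≤ δ₄ * (‖S.j η‖ * ‖S.j (t (n + 1))‖) := this
      _ = δ₄ * α * ‖S.j (t (n + 1))‖ := by rw [hα_def]; ring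
  -- telescoping bound for the nonlinearity
  set q : ℕ → M := fun n => η + ∑ k ∈ Finset.range n, t (k + 1) with hq_def
  have hq0 : q 0 = η := by simp [hq_def]
  have hqsucc : ∀ n, q (n + 1) = q n + t (n + 1) := by
    intro n
    rw [hq_def]
    simp only [Finset.sum_range_succ]
    abel
  clear_value q
  have htel : ∀ n, ‖F (S.j x0 + S.j (q n)) - F (S.j x0) - T (S.j (q n))‖ ≤
      γ₂ * (α + ∑ k ∈ Finset.range n, ‖S.j (t (k + 1))‖) := by
    intro n
    induction n with
    | zero =>
      have := hγ₂ x0 η hηmem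
      rw [hq0]
      simpa [hα_def] using this
    | succ m ih =>
      have hstep := hγ₂ (x0 + q m) (t (m + 1)) (S.A_mem_sumSet_two (htmem (m + 1)))
      rw [map_add (S.j)] at hstep
      have hqj : S.j (q (m + 1)) = S.j (q m) + S.j (t (m + 1)) := by
        rw [hqsucc m, map_add]
      have e : F (S.j x0 + S.j (q (m + 1))) - F (S.j x0) - T (S.j (q (m + 1))) =
          (F (S.j x0 + S.j (q m) + S.j (t (m + 1))) - F (S.j x0 + S.j (q m)) -
            T (S.j (t (m + 1)))) +
          (F (S.j x0 + S.j (q m)) - F (S.j x0) - T (S.j (q m))) := by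
        rw [hqj, map_add T]
        have e2 : S.j x0 + (S.j (q m) + S.j (t (m + 1))) =
            S.j x0 + S.j (q m) + S.j (t (m + 1)) := by abel
        rw [e2]
        abel
      rw [e, Finset.sum_range_succ]
      calc ‖_ + _‖ ≤ _ := norm_add_le _ _
        _ ≤ γ₂ * ‖S.j (t (m + 1))‖ + γ₂ * (α + ∑ k ∈ Finset.range m, ‖S.j (t (k + 1))‖) :=
            add_le_add hstep ih
        _ = γ₂ * (α + (∑ k ∈ Finset.range m, ‖S.j (t (k + 1))‖ + ‖S.j (t (m + 1))‖)) := by ring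
  have hqj_tend : Tendsto (fun n => S.j (q n)) atTop (nhds (S.j h)) := by
    have e : ∀ n, S.j (q n) = S.j η + ∑ k ∈ Finset.range n, S.j (t (k + 1)) := by
      intro n
      rw [hq_def]
      simp only [map_add, map_sum]
    have h1 : Tendsto (fun n => ∑ k ∈ Finset.range n, S.j (t (k + 1))) atTop (nhds g) := by
      rw [hg_def]
      exact hsummable_jt1'.hasSum.tendsto_sum_nat
    have h2 := (tendsto_const_nhds (x := S.j η) (f := atTop)).add h1
    rw [hjh_dec]
    exact h2.congr (fun n => (e n).symm)
  have hxmj : S.j xm = S.j x0 + S.j h := by rw [hh_def, map_sub S.j xm x0]; abel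
  have hFlin : ‖F (S.j xm) - F (S.j x0) - T (S.j h)‖ ≤ γ₂ * (α + G) := by
    rw [hxmj]
    have htend : Tendsto (fun n => ‖F (S.j x0 + S.j (q n)) - F (S.j x0) - T (S.j (q n))‖) atTop
        (nhds ‖F (S.j x0 + S.j h) - F (S.j x0) - T (S.j h)‖) := by
      apply Tendsto.norm
      refine Tendsto.sub (Tendsto.sub ?_ tendsto_const_nhds) ?_
      · exact (hFcont.tendsto _).comp (tendsto_const_nhds.add hqj_tend)
      · exact (T.continuous.tendsto _).comp hqj_tend
    refine le_of_tendsto htend ?_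
    filter_upwards with n
    calc ‖F (S.j x0 + S.j (q n)) - F (S.j x0) - T (S.j (q n))‖
        ≤ γ₂ * (α + ∑ k ∈ Finset.range n, ‖S.j (t (k + 1))‖) := htel n
      _ ≤ γ₂ * (α + G) := by
          have hpart : ∑ k ∈ Finset.range n, ‖S.j (t (k + 1))‖ ≤ G := by
            rw [hG_def]
            exact Summable.sum_le_tsum (Finset.range n) (fun i _ => norm_nonneg _) hsummable_jt1
          exact mul_le_mul_of_nonneg_left (by linarith only [hpart]) hγ₂0
  -- the main RIP chain
  set dv := F (S.j xm) - F (S.j x0) with hdv_def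
  clear_value dv
  have hsummable_Tjt : Summable (fun n => T (S.j (t (n + 1)))) := by
    apply Summable.of_norm
    refine Summable.of_nonneg_of_le (fun n => norm_nonneg _) (fun n => T.le_opNorm _) ?_
    exact hsummable_jt1.mul_left ‖T‖
  have hTg : T g = ∑' n, T (S.j (t (n + 1))) := by
    rw [hg_def]
    exact T.map_tsum hsummable_jt1'
  have hinner_sum : ⟪T (S.j η), T g⟫ = ∑' n, ⟪T (S.j η), T (S.j (t (n + 1)))⟫ := by
    rw [hTg]
    exact (innerSL ℝ (T (S.j η))).map_tsum hsummable_Tjt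
  have hsummable_inner : Summable (fun n => ⟪T (S.j η), T (S.j (t (n + 1)))⟫) := by
    apply Summable.of_norm
    refine Summable.of_nonneg_of_le (fun n => norm_nonneg _)
      (fun n => by simpa [Real.norm_eq_abs] using hcross n) ?_
    exact hsummable_jt1.mul_left (δ₄ * α)
  have habs : |⟪T (S.j η), T g⟫| ≤ δ₄ * α * G := by
    have hnorm : Summable (fun n => ‖⟪T (S.j η), T (S.j (t (n + 1)))⟫‖) := by
      simpa [Real.norm_eq_abs] using hsummable_inner.abs
    rw [hinner_sum]
    calc |∑' n, ⟪T (S.j η), T (S.j (t (n + 1)))⟫| ≤ ∑' n, |⟪T (S.j η), T (S.j (t (n + 1)))⟫| := by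
          simpa [Real.norm_eq_abs] using norm_tsum_le_tsum_norm hnorm
      _ ≤ ∑' n, δ₄ * α * ‖S.j (t (n + 1))‖ :=
          Summable.tsum_le_tsum hcross hsummable_inner.abs (hsummable_jt1.mul_left (δ₄ * α))
      _ = δ₄ * α * (∑' n, ‖S.j (t (n + 1))‖) := tsum_mul_left
      _ = δ₄ * α * G := by rw [hG_def]
  have hTjh : T (S.j h) = T (S.j η) + T g := by rw [hjh_dec, map_add]
  have hkey1 : ‖T (S.j η)‖ ^ 2 ≤ ‖T (S.j η)‖ * (ε + γ₂ * (α + G)) + δ₄ * α * G := by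
    have e1 : ⟪T (S.j η), T (S.j h)⟫ = ‖T (S.j η)‖ ^ 2 + ⟪T (S.j η), T g⟫ := by
      rw [hTjh, inner_add_right, real_inner_self_eq_norm_sq]
    have e2 : ⟪T (S.j η), T (S.j h)⟫ ≤ ‖T (S.j η)‖ * (ε + γ₂ * (α + G)) := by
      have esplit : ⟪T (S.j η), T (S.j h)⟫ = ⟪T (S.j η), dv⟫ + ⟪T (S.j η), T (S.j h) - dv⟫ := by
        rw [← inner_add_right]
        congr 1
        abel
      have c1 : ⟪T (S.j η), dv⟫ ≤ ‖T (S.j η)‖ * ε := by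
        refine le_trans (real_inner_le_norm _ _) ?_
        exact mul_le_mul_of_nonneg_left hfeas (norm_nonneg _)
      have c2 : ⟪T (S.j η), T (S.j h) - dv⟫ ≤ ‖T (S.j η)‖ * (γ₂ * (α + G)) := by
        refine le_trans (real_inner_le_norm _ _) ?_
        refine mul_le_mul_of_nonneg_left ?_ (norm_nonneg _)
        rw [norm_sub_rev]
        exact hFlin
      rw [esplit]
      have hr : ‖T (S.j η)‖ * (ε + γ₂ * (α + G)) =
          ‖T (S.j η)‖ * ε + ‖T (S.j η)‖ * (γ₂ * (α + G)) := by ring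
      linarith only [c1, c2, hr]
    have e3 : -(δ₄ * α * G) ≤ ⟪T (S.j η), T g⟫ := (abs_le.mp habs).1
    linarith only [e1, e2, e3]
  have hRIPη := hRIP2 η hηmem
  have hTηle : ‖T (S.j η)‖ ≤ e2 * α := by
    have h1 : ‖T (S.j η)‖ ^ 2 ≤ (1 + δ₂) * α ^ 2 := by rw [hα_def]; exact hRIPη.2
    calc ‖T (S.j η)‖ = Real.sqrt (‖T (S.j η)‖ ^ 2) := (Real.sqrt_sq (norm_nonneg _)).symm
      _ ≤ Real.sqrt ((1 + δ₂) * α ^ 2) := Real.sqrt_le_sqrt h1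
      _ = e2 * α := by
          rw [Real.sqrt_mul (by linarith : (0:ℝ) ≤ 1 + δ₂), Real.sqrt_sq hα0, he2_def]
  have hlow : (1 - δ₂) * α ^ 2 ≤ ‖T (S.j η)‖ ^ 2 := by rw [hα_def]; exact hRIPη.1
  have hαbound : α ≤ P * ε + Q * (sa * σ) := by
    have hL0 : 0 ≤ ε + γ₂ * (α + G) := by
      have := mul_nonneg hγ₂0 (add_nonneg hα0 hG0)
      linarith only [this, hε]
    have hm : ‖T (S.j η)‖ * (ε + γ₂ * (α + G)) ≤ e2 * α * (ε + γ₂ * (α + G)) :=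
      mul_le_mul_of_nonneg_right hTηle hL0
    have hαG : α * G ≤ α * (ρ * α + 2 * sa * σ) := mul_le_mul_of_nonneg_left hGle hα0
    have k1 : (0:ℝ) ≤ e2 * γ₂ + δ₄ := by
      linarith only [mul_nonneg he2_pos.le hγ₂0, hδ₄0]
    have k2 : (e2 * γ₂ + δ₄) * (α * G) ≤ (e2 * γ₂ + δ₄) * (α * (ρ * α + 2 * sa * σ)) :=
      mul_le_mul_of_nonneg_left hαG k1
    have s1 : ‖T (S.j η)‖ ^ 2 ≤ e2 * α * (ε + γ₂ * (α + G)) + δ₄ * α * G := by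
      linarith only [hkey1, hm]
    have s2 : (1 - δ₂) * α ^ 2 ≤ e2 * α * (ε + γ₂ * (α + G)) + δ₄ * α * G := le_trans hlow s1
    have s4 : (1 - δ₂) * α ^ 2 ≤ e2 * α * ε + e2 * γ₂ * α ^ 2 + (e2 * γ₂ + δ₄) * (α * G) := by
      nlinarith only [s2]
    have s5 : (1 - δ₂) * α ^ 2 ≤ e2 * α * ε + e2 * γ₂ * α ^ 2 +
        (e2 * γ₂ + δ₄) * (α * (ρ * α + 2 * sa * σ)) := by linarith only [s4, k2]
    have hcα : c * α ^ 2 ≤ α * (e2 * ε + 2 * (e2 * γ₂ + δ₄) * (sa * σ)) := by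
      rw [hc_def]
      nlinarith only [s5]
    rcases eq_or_lt_of_le hα0 with h0 | h0
    · rw [← h0]
      have : 0 ≤ Q * (sa * σ) := mul_nonneg hQ (mul_nonneg hsa0 hσ0)
      linarith only [this, mul_pos hP hε]
    · have hdiv : c * α ≤ e2 * ε + 2 * (e2 * γ₂ + δ₄) * (sa * σ) := by
        have e : α * (c * α) ≤ α * (e2 * ε + 2 * (e2 * γ₂ + δ₄) * (sa * σ)) := by
          nlinarith only [hcα]
        exact le_of_mul_le_mul_left e h0
      rw [hP_def, hQ_def]
      rw [div_mul_eq_mul_div, div_mul_eq_mul_div, ← add_div, le_div_iff₀ hc]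
      nlinarith only [hdiv]
  -- conclusions
  have hjhle : ‖S.j h‖ ≤ α + G := by
    rw [hjh_dec]
    calc ‖S.j η + g‖ ≤ ‖S.j η‖ + ‖g‖ := norm_add_le _ _
      _ ≤ α + G := by rw [hα_def]; linarith only [hgG]
  constructor
  · have e0 : S.j xm - S.j x0 = S.j h := by rw [hh_def, map_sub S.j xm x0]
    rw [e0, hsigma_eq]
    calc ‖S.j h‖ ≤ α + G := hjhle
      _ ≤ α + (ρ * α + 2 * sa * σ) := by linarith only [hGle]
      _ = (1 + ρ) * α + 2 * sa * σ := by ring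
      _ ≤ (1 + ρ) * (P * ε + Q * (sa * σ)) + 2 * sa * σ := by
          have := mul_le_mul_of_nonneg_left hαbound (by linarith only [hρ0] : (0:ℝ) ≤ 1 + ρ)
          linarith only [this]
      _ ≤ ((1 + ρ) * Q + 2 * Q * ρ + 3) * sa * σ + ((3 + ρ) * P + 1) * ε := by
          have n1 : 0 ≤ sa * σ := mul_nonneg hsa0 hσ0
          nlinarith only [n1, hε.le, mul_nonneg hP.le hε.le,
            mul_nonneg (mul_nonneg hQ hρ0) n1]
  · rw [hsigma_eq]
    have hsplith : ‖h‖ = ‖h'‖ + ‖h''‖ := by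
      have hb : ∀ z ∈ S.Asub i0, ‖h - h'‖ ≤ ‖h - z‖ := by
        rw [← hh''_def]
        exact hh'best
      have := S.norm_split_M i0 h h' hh'mem hb
      rw [← hh''_def] at this
      exact this
    have e1 : ‖h'‖ ≤ ss * α :=
      le_trans hh'jle (mul_le_mul_of_nonneg_left hjh'le hss0)
    calc ‖h‖ = ‖h'‖ + ‖h''‖ := hsplith
      _ ≤ 2 * ‖h'‖ + 2 * σ := by linarith only [hcone]
      _ ≤ 2 * (ss * α) + 2 * σ := by linarith only [e1]
      _ ≤ 2 * ss * (P * ε + Q * (sa * σ)) + 2 * σ := by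
          have := mul_le_mul_of_nonneg_left hαbound (by linarith only [hss0] : (0:ℝ) ≤ 2 * ss)
          linarith only [this]
      _ ≤ ((1 + ρ) * Q + 2 * Q * ρ + 3) * σ + ((3 + ρ) * P + 1) * ss * ε := by
          have hρss : ss * (Q * (sa * σ)) = Q * ρ * σ := by rw [hρ_def]; ring
          have n1 : 0 ≤ ss * ε := mul_nonneg hss0 hε.le
          nlinarith only [hρss, hσ0, n1, mul_nonneg hQ hσ0,
            mul_nonneg (mul_nonneg hρ0 hQ) hσ0,
            mul_nonneg (mul_nonneg hP.le hss0) hε.le,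
            mul_nonneg (mul_nonneg (mul_nonneg hρ0 hP.le) hss0) hε.le]
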